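/- (Second directional derivative of the entropy) Let n ≥ 2, let p = (p_1,…,p_n) with 0 < p_i < 1 for all i, let l ≠ m in [n], and let D_u = ∂/∂p_l − ∂/∂p_m. Then D²_u H(Z_p) = 2·∑_{k=0}^n Δ²_k b(k, p_{l̂,m̂}) · log₂ b(k,p) − (1/ln 2)·∑_{k=0}^n (Δ_k b(k, p_l̂) − Δ_k b(k, p_m̂))² / b(k,p). -/

import Mathlib

/-! Each `b(k, S, p)` is affine in every coordinate `p_l`, `l ∈ S`:
`b(k, S, p) = b(k, S ∖ l, p) − p_l · Δ_k b(k, S ∖ l, p)`. Hence `∂_l b(k, p) = −Δ_k b(k, p_l̂)`,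
`∂_l² b = 0` and `∂_l ∂_m b(k, p) = Δ²_k b(k, p_{l̂,m̂})`. By the chain rule
`∂_l H = ∑_k Δ_k b(k, p_l̂) (log₂ b(k, p) + 1 / ln 2)`, and the `1 / ln 2` part vanishes because
`∑_k Δ_k b(k, p_l̂)` telescopes. The resulting closed form `G_{l,m}` of `D_u H` on the open cube
is antisymmetric in `(l, m)`, so `D_u² H = ∂_l G_{l,m} + ∂_m G_{m,l}` needs only one computation. -/

open Finset

/-- `b(k, S, p)`: the Poisson–binomial probability mass function built from the
parameters `p i`, `i ∈ S`, defined for all integers `k`. -/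
noncomputable def pbinOn (n : ℕ) (S : Finset (Fin n)) (p : Fin n → ℝ) (k : ℤ) : ℝ :=
  ∑ A ∈ S.powerset.filter (fun A : Finset (Fin n) => (A.card : ℤ) = k),
    (∏ i ∈ A, p i) * ∏ j ∈ S \ A, (1 - p j)

/-- Shannon entropy (base 2) of the Poisson–binomial distribution. -/
noncomputable def pbinEnt (n : ℕ) (p : Fin n → ℝ) : ℝ :=
  -∑ k ∈ Finset.range (n + 1),
    pbinOn n Finset.univ p k * Real.logb 2 (pbinOn n Finset.univ p k)

/-- The partial derivative with respect to the `l`-th coordinate. -/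
noncomputable def pderiv (n : ℕ) (l : Fin n) (f : (Fin n → ℝ) → ℝ) (p : Fin n → ℝ) : ℝ :=
  deriv (fun x : ℝ => f (Function.update p l x)) (p l)

/-- The directional derivative operator `D_u = ∂/∂p_l − ∂/∂p_m`. -/
noncomputable def Du (n : ℕ) (l m : Fin n) (f : (Fin n → ℝ) → ℝ) (p : Fin n → ℝ) : ℝ :=
  pderiv n l f p - pderiv n m f p

open Function Real Filter Topology

def bwdDiff (f : ℤ → ℝ) (k : ℤ) : ℝ := f k - f (k - 1)

lemma bwdDiff_bwdDiff (f : ℤ → ℝ) (k : ℤ) :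
    bwdDiff (bwdDiff f) k = f k - 2 * f (k - 1) + f (k - 2) := by
  simp only [bwdDiff, sub_sub, show (1 : ℤ) + 1 = 2 by norm_num]
  ring

lemma sum_range_bwdDiff (f : ℤ → ℝ) (N : ℕ) :
    ∑ k ∈ range (N + 1), bwdDiff f k = f N - f (-1) := by
  simpa [bwdDiff] using sum_range_sub (fun i : ℕ => f ((i : ℤ) - 1)) (N + 1)

lemma HasDerivAt.logb {f : ℝ → ℝ} {f' x : ℝ} (hf : HasDerivAt f f' x) (hx : f x ≠ 0) (b : ℝ) :
    HasDerivAt (fun y => Real.logb b (f y)) (f' / (f x * Real.log b)) x :=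
  ((hf.log hx).div_const (Real.log b)).congr_deriv (div_div _ _ _)

section PoissonBinomial

variable {n : ℕ} (S : Finset (Fin n)) (p : Fin n → ℝ)

lemma pbinOn_eq_zero_of_neg {k : ℤ} (hk : k < 0) : pbinOn n S p k = 0 := by
  refine sum_eq_zero fun A hA => ?_
  have := (mem_filter.1 hA).2
  omega

lemma pbinOn_eq_zero_of_card_lt {k : ℤ} (hk : (S.card : ℤ) < k) : pbinOn n S p k = 0 := by
  refine sum_eq_zero fun A hA => ?_
  obtain ⟨hAS, hAk⟩ := mem_filter.1 hA
  have := card_le_card (mem_powerset.1 hAS)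
  omega

lemma pbinOn_pos (hp : ∀ i ∈ S, 0 < p i ∧ p i < 1) {k : ℤ} (hk₀ : 0 ≤ k) (hkS : k ≤ S.card) :
    0 < pbinOn n S p k := by
  have hterm : ∀ B ⊆ S, 0 < (∏ i ∈ B, p i) * ∏ j ∈ S \ B, (1 - p j) := fun B hB =>
    mul_pos (prod_pos fun i hi => (hp i (hB hi)).1)
      (prod_pos fun j hj => sub_pos.2 (hp j (mem_sdiff.1 hj).1).2)
  obtain ⟨A, hAS, hA⟩ := exists_subset_card_eq (s := S) (n := k.toNat) (by omega)
  refine sum_pos (fun B hB => hterm B (mem_powerset.1 (mem_filter.1 hB).1)) ⟨A, ?_⟩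
  exact mem_filter.2 ⟨mem_powerset.2 hAS, by omega⟩

lemma pbinOn_eq_of_mem {l : Fin n} (hl : l ∈ S) (k : ℤ) :
    pbinOn n S p k =
      p l * pbinOn n (S.erase l) p (k - 1) + (1 - p l) * pbinOn n (S.erase l) p k := by
  set T := S.erase l
  have hlT : l ∉ T := notMem_erase l S
  have hS : S = insert l T := (insert_erase hl).symm
  simp only [pbinOn, sum_filter, hS, sum_powerset_insert hlT, mul_sum]
  rw [add_comm]
  congr 1
  · refine sum_congr rfl fun A hA => ?_
    have hlA : l ∉ A := fun h => hlT (mem_powerset.1 hA h)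
    rw [card_insert_of_notMem hlA, insert_sdiff_insert, sdiff_insert,
      erase_eq_of_notMem (fun h => hlT (mem_sdiff.1 h).1), prod_insert hlA]
    push_cast
    simp only [show ∀ c : ℤ, c + 1 = k ↔ c = k - 1 from fun c => by omega]
    split_ifs <;> ring
  · refine sum_congr rfl fun A hA => ?_
    have hlA : l ∉ A := fun h => hlT (mem_powerset.1 hA h)
    rw [insert_sdiff_of_notMem _ hlA, prod_insert (fun h => hlT (mem_sdiff.1 h).1)]
    split_ifs <;> ring

lemma pbinOn_update_of_notMem {l : Fin n} (hl : l ∉ S) (x : ℝ) (k : ℤ) :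
    pbinOn n S (update p l x) k = pbinOn n S p k := by
  have hS : ∀ i ∈ S, update p l x i = p i := fun i hi =>
    update_of_ne (ne_of_mem_of_not_mem hi hl) _ _
  refine sum_congr rfl fun A hA => ?_
  have hAS := mem_powerset.1 (mem_filter.1 hA).1
  rw [prod_congr rfl fun i hi => hS i (hAS hi),
    prod_congr rfl fun j hj => congrArg (1 - ·) (hS j (mem_sdiff.1 hj).1)]

lemma hasDerivAt_pbinOn_update {l : Fin n} (hl : l ∈ S) (k : ℤ) (x : ℝ) :
    HasDerivAt (fun y => pbinOn n S (update p l y) k)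
      (-bwdDiff (pbinOn n (S.erase l) p) k) x := by
  have hline : (fun y => pbinOn n S (update p l y) k) = fun y =>
      y * pbinOn n (S.erase l) p (k - 1) + (1 - y) * pbinOn n (S.erase l) p k := by
    funext y
    simp only [pbinOn_eq_of_mem S _ hl, update_self,
      pbinOn_update_of_notMem _ p (notMem_erase l S)]
  rw [hline]
  exact (((hasDerivAt_id' x).mul_const _).add (((hasDerivAt_id' x).const_sub 1).mul_const _))
    |>.congr_deriv (by simp only [bwdDiff]; ring)

lemma hasDerivAt_bwdDiff_pbinOn_update {l : Fin n} (hl : l ∈ S) (k : ℤ) (x : ℝ) :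
    HasDerivAt (fun y => bwdDiff (pbinOn n S (update p l y)) k)
      (-bwdDiff (bwdDiff (pbinOn n (S.erase l) p)) k) x :=
  ((hasDerivAt_pbinOn_update S p hl k x).sub (hasDerivAt_pbinOn_update S p hl (k - 1) x))
    |>.congr_deriv (by simp only [bwdDiff]; ring)

lemma hasDerivAt_bwdDiff_pbinOn_update_of_notMem {l : Fin n} (hl : l ∉ S) (k : ℤ) (x : ℝ) :
    HasDerivAt (fun y => bwdDiff (pbinOn n S (update p l y)) k) 0 x := by
  simp only [bwdDiff, pbinOn_update_of_notMem S p hl]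
  exact hasDerivAt_const x _

end PoissonBinomial

lemma pbinOn_univ_pos {n : ℕ} {p : Fin n → ℝ} (hp : ∀ i, 0 < p i ∧ p i < 1) {k : ℕ}
    (hk : k ∈ range (n + 1)) : 0 < pbinOn n univ p k :=
  pbinOn_pos _ p (fun i _ => hp i) (Int.natCast_nonneg k)
    (by rw [card_univ, Fintype.card_fin]; have := mem_range.1 hk; omega)

lemma sum_range_bwdDiff_pbinOn_erase {n : ℕ} (p : Fin n → ℝ) (l : Fin n) :
    ∑ k ∈ range (n + 1), bwdDiff (pbinOn n (univ.erase l) p) k = 0 := by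
  have hcard : ((univ.erase l).card : ℤ) < n := by
    rw [card_erase_of_mem (mem_univ l), card_univ, Fintype.card_fin]; have := l.pos; omega
  rw [sum_range_bwdDiff, pbinOn_eq_zero_of_card_lt _ _ hcard,
    pbinOn_eq_zero_of_neg _ _ (by norm_num), sub_zero]

lemma pderiv_congr {n : ℕ} {f g : (Fin n → ℝ) → ℝ} {p : Fin n → ℝ} (h : f =ᶠ[𝓝 p] g)
    (l : Fin n) : pderiv n l f p = pderiv n l g p := by
  have hline : Tendsto (fun x => update p l x) (𝓝 (p l)) (𝓝 p) := by
    have hcont : Continuous fun x : ℝ => update p l x := continuous_const.update l continuous_id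
    simpa using hcont.tendsto (p l)
  exact (h.comp_tendsto hline).deriv_eq

lemma Du_congr {n : ℕ} {f g : (Fin n → ℝ) → ℝ} {p : Fin n → ℝ} (h : f =ᶠ[𝓝 p] g)
    (l m : Fin n) : Du n l m f p = Du n l m g p := by
  rw [Du, Du, pderiv_congr h, pderiv_congr h]

lemma eventually_forall_pos_and_lt_one {n : ℕ} {p : Fin n → ℝ} (hp : ∀ i, 0 < p i ∧ p i < 1) :
    ∀ᶠ q in 𝓝 p, ∀ i, 0 < q i ∧ q i < 1 :=
  eventually_all.2 fun i =>
    ((continuous_apply i).tendsto p).eventually (Ioo_mem_nhds (hp i).1 (hp i).2)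

lemma pderiv_pbinEnt {n : ℕ} {q : Fin n → ℝ} (hq : ∀ i, 0 < q i ∧ q i < 1) (l : Fin n) :
    pderiv n l (pbinEnt n) q =
      ∑ k ∈ range (n + 1), bwdDiff (pbinOn n (univ.erase l) q) k * logb 2 (pbinOn n univ q k) := by
  have hderiv := HasDerivAt.fun_sum (u := range (n + 1)) fun k hk =>
    let hb := hasDerivAt_pbinOn_update univ q (mem_univ l) k (q l)
    have hpos : pbinOn n univ (update q l (q l)) k ≠ 0 := by
      rw [update_eq_self]; exact (pbinOn_univ_pos hq hk).ne'
    hb.mul (hb.logb hpos 2)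
  refine hderiv.neg.deriv.trans ?_
  rw [update_eq_self]
  -- the `1 / log 2` part of `d(b log₂ b) = (log₂ b + 1 / log 2) db` telescopes away
  calc _ = ∑ k ∈ range (n + 1), bwdDiff (pbinOn n (univ.erase l) q) k * logb 2 (pbinOn n univ q k)
        + (∑ k ∈ range (n + 1), bwdDiff (pbinOn n (univ.erase l) q) k) / log 2 := by
          rw [sum_div, ← sum_add_distrib, ← sum_neg_distrib]
          refine sum_congr rfl fun k hk => ?_
          have := (pbinOn_univ_pos hq hk).ne'
          field_simp
          ring
    _ = _ := by rw [sum_range_bwdDiff_pbinOn_erase, zero_div, add_zero]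

noncomputable def pbinEntDu (n : ℕ) (l m : Fin n) (q : Fin n → ℝ) : ℝ :=
  ∑ k ∈ range (n + 1),
    (bwdDiff (pbinOn n (univ.erase l) q) k - bwdDiff (pbinOn n (univ.erase m) q) k) *
      logb 2 (pbinOn n univ q k)

lemma Du_pbinEnt {n : ℕ} {q : Fin n → ℝ} (hq : ∀ i, 0 < q i ∧ q i < 1) (l m : Fin n) :
    Du n l m (pbinEnt n) q = pbinEntDu n l m q := by
  rw [Du, pderiv_pbinEnt hq, pderiv_pbinEnt hq, pbinEntDu, ← sum_sub_distrib]
  simp only [sub_mul]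

lemma pbinEntDu_swap (n : ℕ) (l m : Fin n) : pbinEntDu n m l = -pbinEntDu n l m := by
  funext q
  simp only [pbinEntDu, Pi.neg_apply, ← sum_neg_distrib, ← neg_mul, neg_sub]

lemma pderiv_pbinEntDu {n : ℕ} {p : Fin n → ℝ} (hp : ∀ i, 0 < p i ∧ p i < 1) {l m : Fin n}
    (hlm : l ≠ m) :
    pderiv n l (pbinEntDu n l m) p =
      ∑ k ∈ range (n + 1),
        (bwdDiff (bwdDiff (pbinOn n ((univ.erase l).erase m) p)) k * logb 2 (pbinOn n univ p k) -
          (bwdDiff (pbinOn n (univ.erase l) p) k - bwdDiff (pbinOn n (univ.erase m) p) k) *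
            bwdDiff (pbinOn n (univ.erase l) p) k / (pbinOn n univ p k * log 2)) := by
  have hderiv := HasDerivAt.fun_sum (u := range (n + 1)) fun k hk =>
    let hb := hasDerivAt_pbinOn_update univ p (mem_univ l) k (p l)
    have hpos : pbinOn n univ (update p l (p l)) k ≠ 0 := by
      rw [update_eq_self]; exact (pbinOn_univ_pos hp hk).ne'
    ((hasDerivAt_bwdDiff_pbinOn_update_of_notMem _ p (notMem_erase l univ) k (p l)).sub
      (hasDerivAt_bwdDiff_pbinOn_update _ p (mem_erase.2 ⟨hlm, mem_univ l⟩) k (p l))).mul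
      (hb.logb hpos 2)
  refine hderiv.deriv.trans ?_
  simp only [Pi.sub_apply, update_eq_self, erase_right_comm]
  refine sum_congr rfl fun k hk => ?_
  have := (pbinOn_univ_pos hp hk).ne'
  field_simp
  ring

theorem second_directional_deriv_entropy_general (n : ℕ) (p : Fin n → ℝ)
    (hp : ∀ i, 0 < p i ∧ p i < 1) (l m : Fin n) (hlm : l ≠ m) :
    Du n l m (fun q => Du n l m (fun r => pbinEnt n r) q) p =
      2 * ∑ k ∈ Finset.range (n + 1),
          (pbinOn n ((Finset.univ.erase l).erase m) p k -
            2 * pbinOn n ((Finset.univ.erase l).erase m) p ((k : ℤ) - 1) +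
            pbinOn n ((Finset.univ.erase l).erase m) p ((k : ℤ) - 2)) *
          Real.logb 2 (pbinOn n Finset.univ p k) -
        (1 / Real.log 2) * ∑ k ∈ Finset.range (n + 1),
          ((pbinOn n (Finset.univ.erase l) p k - pbinOn n (Finset.univ.erase l) p ((k : ℤ) - 1)) -
            (pbinOn n (Finset.univ.erase m) p k - pbinOn n (Finset.univ.erase m) p ((k : ℤ) - 1))) ^ 2 /
            pbinOn n Finset.univ p k := by
  have hDu : Du n l m (fun q => Du n l m (fun r => pbinEnt n r) q) p =
      Du n l m (pbinEntDu n l m) p :=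
    Du_congr ((eventually_forall_pos_and_lt_one hp).mono fun q hq => Du_pbinEnt hq l m) l m
  have hswap : pderiv n m (pbinEntDu n l m) p = -pderiv n m (pbinEntDu n m l) p := by
    rw [pbinEntDu_swap n m l]
    exact deriv.neg
  rw [hDu, Du, hswap, sub_neg_eq_add, pderiv_pbinEntDu hp hlm, pderiv_pbinEntDu hp hlm.symm,
    erase_right_comm, ← sum_add_distrib, mul_sum, mul_sum, ← sum_sub_distrib]
  refine sum_congr rfl fun k hk => ?_
  have := (pbinOn_univ_pos hp hk).ne'
  rw [bwdDiff_bwdDiff]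
  simp only [bwdDiff]
  field_simp
  ring

/-- Second directional derivative of the entropy along `u = e_l − e_m`:
`D²_u H(Z_p) = 2·∑ Δ²_k b(k, p_{l̂,m̂})·log₂ b(k,p)
  − (1/ln 2)·∑ (Δ_k b(k,p_l̂) − Δ_k b(k,p_m̂))² / b(k,p)`. -/
theorem second_directional_deriv_entropy (n : ℕ) (hn : 2 ≤ n) (p : Fin n → ℝ)
    (hp : ∀ i, 0 < p i ∧ p i < 1) (l m : Fin n) (hlm : l ≠ m) :
    Du n l m (fun q => Du n l m (fun r => pbinEnt n r) q) p =
      2 * ∑ k ∈ Finset.range (n + 1),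
          (pbinOn n ((Finset.univ.erase l).erase m) p k -
            2 * pbinOn n ((Finset.univ.erase l).erase m) p ((k : ℤ) - 1) +
            pbinOn n ((Finset.univ.erase l).erase m) p ((k : ℤ) - 2)) *
          Real.logb 2 (pbinOn n Finset.univ p k) -
        (1 / Real.log 2) * ∑ k ∈ Finset.range (n + 1),
          ((pbinOn n (Finset.univ.erase l) p k - pbinOn n (Finset.univ.erase l) p ((k : ℤ) - 1)) -
            (pbinOn n (Finset.univ.erase m) p k - pbinOn n (Finset.univ.erase m) p ((k : ℤ) - 1))) ^ 2 /
            pbinOn n Finset.univ p k :=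
  second_directional_deriv_entropy_general n p hp l m hlm
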